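/- Let V ⊂ (ℝ_max^n)² be a congruence, A ∈ ℝ_max^{n×n}, C ∈ ℝ_max^{q×n}, and K := V^⊤. Then the set L_fg(C,A,V) of cofinitely generated (C,A)-conditioned invariant congruences containing V admits a minimal element V_fg(C,A) if and only if the set M_fg(Aᵗ,Cᵗ,K) of finitely generated (Aᵗ,Cᵗ)-controlled invariant semimodules contained in K admits a maximal element K^fg(Aᵗ,Cᵗ); and when these elements exist, V_fg(C,A) = (K^fg(Aᵗ,Cᵗ))^⊥. -/

import Mathlib

/-!
Max-plus (tropical) framework.

The max-plus semiring `ℝ_max = ℝ ∪ {-∞}` is modelled as `WithBot ℝ`: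
max-plus addition `a ⊕ b = max a b` is the lattice `⊔`, and max-plus
multiplication `a ⊙ b = a + b` is `+` (with `⊥ = -∞` absorbing).
The topology induced by the metric `d(a,b) = |exp a - exp b|` is the
order topology.
-/

/-- The max-plus semiring `ℝ ∪ {-∞}`. -/
abbrev Rmax : Type := WithBot ℝ

/-- The topology of `ℝ_max` (the order topology, which coincides with the
topology induced by the metric `d(a,b) = |exp a - exp b|`). -/
instance : TopologicalSpace Rmax := Preorder.topology Rmax

instance : OrderTopology Rmax := ⟨rfl⟩

/-- Vectors with entries in a (max-plus-like) semiring `R`. -/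
abbrev Vec (R : Type*) (n : ℕ) := Fin n → R

section Defs

variable {R : Type*} [LinearOrder R] [Add R] [OrderBot R]

/-- Max-plus scalar action on a vector: `(λ x)_i = λ ⊙ x_i = λ + x_i`. -/
def sm {n : ℕ} (lam : R) (x : Vec R n) : Vec R n := fun i => lam + x i

/-- Max-plus matrix-vector product: `(A x)_i = ⊕_k A_{ik} ⊙ x_k = max_k (A_{ik} + x_k)`. -/
def mulVecMP {m n : ℕ} (A : Matrix (Fin m) (Fin n) R) (x : Vec R n) : Vec R m :=
  fun i => Finset.univ.sup fun k => A i k + x k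

/-- A subsemimodule (max-plus cone) of `R^n`: a subset stable under
max-plus linear combinations `λ x ⊕ μ y`. -/
def IsSemimodule {n : ℕ} (K : Set (Vec R n)) : Prop :=
  ∀ x ∈ K, ∀ y ∈ K, ∀ lam mu : R, (sm lam x ⊔ sm mu y) ∈ K

/-- Max-plus scalar action on a pair of vectors. -/
def smP {n : ℕ} (lam : R) (p : Vec R n × Vec R n) : Vec R n × Vec R n :=
  (sm lam p.1, sm lam p.2)

/-- A subsemimodule of `(R^n)²`. -/
def IsPairSemimodule {n : ℕ} (W : Set (Vec R n × Vec R n)) : Prop :=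
  ∀ p ∈ W, ∀ q ∈ W, ∀ lam mu : R, (smP lam p ⊔ smP mu q) ∈ W

/-- A congruence on `R^n`: an equivalence relation which is a
subsemimodule of `(R^n)²`. -/
def IsCongruence {n : ℕ} (W : Set (Vec R n × Vec R n)) : Prop :=
  Equivalence (fun x y => (x, y) ∈ W) ∧ IsPairSemimodule W

/-- The (max-plus) kernel of a matrix: `ker E = {(x,y) : E x = E y}`. -/
def kerM {p n : ℕ} (E : Matrix (Fin p) (Fin n) R) : Set (Vec R n × Vec R n) :=
  {w | mulVecMP E w.1 = mulVecMP E w.2}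

/-- The image of a matrix: `Im E = {E x}`. -/
def imM {n q : ℕ} (E : Matrix (Fin n) (Fin q) R) : Set (Vec R n) :=
  {y | ∃ x : Vec R q, y = mulVecMP E x}

/-- `A W = {(A x, A y) : (x,y) ∈ W}` for a set of pairs `W`. -/
def mapCong {n : ℕ} (A : Matrix (Fin n) (Fin n) R) (W : Set (Vec R n × Vec R n)) :
    Set (Vec R n × Vec R n) :=
  {p | ∃ w ∈ W, p = (mulVecMP A w.1, mulVecMP A w.2)}

/-- `A S = {A x : x ∈ S}`. -/
def mapSet {n : ℕ} (A : Matrix (Fin n) (Fin n) R) (S : Set (Vec R n)) : Set (Vec R n) :=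
  {y | ∃ x ∈ S, y = mulVecMP A x}

/-- `A⁻¹ S = {x : A x ∈ S}`. -/
def invSet {n : ℕ} (A : Matrix (Fin n) (Fin n) R) (S : Set (Vec R n)) : Set (Vec R n) :=
  {x | mulVecMP A x ∈ S}

/-- `A⁻¹ U = {(x,y) : (A x, A y) ∈ U}` for a set of pairs `U`. -/
def invPair {n : ℕ} (A : Matrix (Fin n) (Fin n) R) (U : Set (Vec R n × Vec R n)) :
    Set (Vec R n × Vec R n) :=
  {p | (mulVecMP A p.1, mulVecMP A p.2) ∈ U}

/-- The max-plus sum of two subsets of `R^n`: `X ⊕ Y = {x ⊕ y : x ∈ X, y ∈ Y}`. -/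
def setSum {n : ℕ} (X Y : Set (Vec R n)) : Set (Vec R n) :=
  {z | ∃ x ∈ X, ∃ y ∈ Y, z = x ⊔ y}

/-- The max-plus sum of two subsets of `(R^n)²`. -/
def pairSum {n : ℕ} (X Y : Set (Vec R n × Vec R n)) : Set (Vec R n × Vec R n) :=
  {z | ∃ x ∈ X, ∃ y ∈ Y, z = x ⊔ y}

/-- `W` is `(C,A)`-conditioned invariant: `A (W ∩ ker C) ⊆ W`. -/
def CondInv {n q : ℕ} (C : Matrix (Fin q) (Fin n) R) (A : Matrix (Fin n) (Fin n) R)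
    (W : Set (Vec R n × Vec R n)) : Prop :=
  mapCong A (W ∩ kerM C) ⊆ W

/-- `X` is `(A,B)`-controlled invariant: `A X ⊆ X ⊕ Im B`. -/
def ContrInv {n q : ℕ} (A : Matrix (Fin n) (Fin n) R) (B : Matrix (Fin n) (Fin q) R)
    (X : Set (Vec R n)) : Prop :=
  mapSet A X ⊆ setSum X (imM B)

/-- The max-plus scalar product `uᵗ v = ⊕_i u_i ⊙ v_i = max_i (u_i + v_i)`. -/
def dotMP {n : ℕ} (u v : Vec R n) : R := Finset.univ.sup fun i => u i + v i

/-- The orthogonal of a semimodule `X ⊆ R^n`: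
`X^⊥ = {(x,y) : xᵗ z = yᵗ z, ∀ z ∈ X}`. -/
def orthS {n : ℕ} (X : Set (Vec R n)) : Set (Vec R n × Vec R n) :=
  {p | ∀ z ∈ X, dotMP p.1 z = dotMP p.2 z}

/-- The orthogonal of a congruence (or set of pairs) `W ⊆ (R^n)²`:
`W^⊤ = {z : xᵗ z = yᵗ z, ∀ (x,y) ∈ W}`. -/
def orthC {n : ℕ} (W : Set (Vec R n × Vec R n)) : Set (Vec R n) :=
  {z | ∀ p ∈ W, dotMP p.1 z = dotMP p.2 z}

/-- The smallest congruence containing a set `S ⊆ (R^n)²`. -/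
def spanCong {n : ℕ} (S : Set (Vec R n × Vec R n)) : Set (Vec R n × Vec R n) :=
  ⋂₀ {W | IsCongruence W ∧ S ⊆ W}

/-- The smallest semimodule containing a set `S ⊆ R^n`. -/
def spanSet {n : ℕ} (S : Set (Vec R n)) : Set (Vec R n) :=
  ⋂₀ {K | IsSemimodule K ∧ S ⊆ K}

end Defs

/-- Membership in `L_fg(C,A,V)`: cofinitely generated `(C,A)`-conditioned
invariant congruences containing `V`. -/
def memLfg {n q : ℕ} (C : Matrix (Fin q) (Fin n) Rmax) (A : Matrix (Fin n) (Fin n) Rmax)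
    (V W : Set (Vec Rmax n × Vec Rmax n)) : Prop :=
  (∃ m : ℕ, ∃ D : Matrix (Fin m) (Fin n) Rmax, W = kerM D) ∧ CondInv C A W ∧ V ⊆ W

/-- Membership in `M_fg(Aᵗ,Cᵗ,K)`: finitely generated `(Aᵗ,Cᵗ)`-controlled
invariant semimodules contained in `K`. -/
def memMfg {n q : ℕ} (A : Matrix (Fin n) (Fin n) Rmax) (C : Matrix (Fin q) (Fin n) Rmax)
    (K X : Set (Vec Rmax n)) : Prop :=
  (∃ m : ℕ, ∃ D : Matrix (Fin n) (Fin m) Rmax, X = imM D) ∧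
    ContrInv A.transpose C.transpose X ∧ X ⊆ K


/-!
The two orthogonals form an antitone Galois connection between sets of pairs and sets of
vectors, and on finitely generated objects they are inverse to each other: `(Im D)^⊥ = ker Dᵗ`
(test against unit vectors) and `(ker E)^⊤ = Im Eᵗ`: for `z ∈ (ker E)^⊤` and each `k`, some
row `i` of `E` satisfies `(z k - E i k) + E i ≤ z`, so `z` is the supremum of these vectors of
`Im Eᵗ`.

The adjunction `xᵗ (A y) = (Aᵗ x)ᵗ y` turns `(Aᵗ,Cᵗ)`-controlled invariance of `X` into
`(C,A)`-conditioned invariance of `X^⊥`, and, applied to the stacked matrix `[D; C]`,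
conditioned invariance of `ker D` into controlled invariance of `Im Dᵗ`. So `W ↦ W^⊤` is an
inclusion-reversing bijection from `L_fg(C,A,V)` onto `M_fg(Aᵗ,Cᵗ,V^⊤)` with inverse `X ↦ X^⊥`,
and minimal elements correspond to maximal ones.
-/

open Finset
open scoped Matrix

namespace MaxPlus

section Galois

variable {R : Type*} [LinearOrder R] [Add R] [OrderBot R] {n : ℕ}

lemma subset_orthS_iff {W : Set (Vec R n × Vec R n)} {X : Set (Vec R n)} :
    W ⊆ orthS X ↔ X ⊆ orthC W :=
  ⟨fun h _ hz _ hp => h hp _ hz, fun h _ hp _ hz => h hz _ hp⟩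

lemma orthS_anti {X Y : Set (Vec R n)} (h : X ⊆ Y) : orthS Y ⊆ orthS X :=
  fun _ hp _ hz => hp _ (h hz)

lemma orthC_anti {V W : Set (Vec R n × Vec R n)} (h : V ⊆ W) : orthC W ⊆ orthC V :=
  fun _ hz _ hp => hz _ (h hp)

end Galois

lemma exists_add_eq {e : Rmax} (he : e ≠ ⊥) (a : Rmax) : ∃ c, e + c = a := by
  obtain ⟨r, rfl⟩ := WithBot.ne_bot_iff_exists.1 he
  induction a using WithBot.recBotCoe with
  | bot => exact ⟨⊥, WithBot.add_bot _⟩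
  | coe s => exact ⟨↑(s - r), by norm_cast; ring⟩

lemma add_finset_sup {ι : Type*} (c : Rmax) (s : Finset ι) (f : ι → Rmax) :
    c + s.sup f = s.sup fun i => c + f i :=
  apply_sup_eq_sup_comp_of_linearOrder (c + ·) (fun _ _ h => add_le_add_right h c)
    (WithBot.add_bot c)

lemma finset_sup_add {ι : Type*} (c : Rmax) (s : Finset ι) (f : ι → Rmax) :
    s.sup f + c = s.sup fun i => f i + c := by
  simpa only [add_comm c] using add_finset_sup c s f

lemma finset_sup_univ_fin_add {α : Type*} [SemilatticeSup α] [OrderBot α] {m q : ℕ}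
    (f : Fin (m + q) → α) :
    univ.sup f =
      (univ.sup fun i => f (Fin.castAdd q i)) ⊔ univ.sup fun i => f (Fin.natAdd m i) :=
  le_antisymm
    (Finset.sup_le fun i _ => Fin.addCases
      (fun i => le_sup_of_le_left (le_sup (f := fun i => f (Fin.castAdd q i)) (mem_univ i)))
      (fun i => le_sup_of_le_right (le_sup (f := fun i => f (Fin.natAdd m i)) (mem_univ i))) i)
    (sup_le (Finset.sup_le fun _ _ => le_sup (mem_univ _))
      (Finset.sup_le fun _ _ => le_sup (mem_univ _)))

variable {m n p q : ℕ}

lemma dotMP_comm (u v : Vec Rmax n) : dotMP u v = dotMP v u := by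
  simp only [dotMP, add_comm]

lemma dotMP_bot_left (z : Vec Rmax n) : dotMP ⊥ z = ⊥ := by
  simp [dotMP]

lemma dotMP_sup_left (x y z : Vec Rmax n) : dotMP (x ⊔ y) z = dotMP x z ⊔ dotMP y z := by
  simp only [dotMP, ← sup_sup]
  exact Finset.sup_congr rfl fun i _ => (max_add_add_right (x i) (y i) (z i)).symm

lemma dotMP_finset_sup_left {ι : Type*} (s : Finset ι) (x : ι → Vec Rmax n) (z : Vec Rmax n) :
    dotMP (s.sup x) z = s.sup fun i => dotMP (x i) z :=
  apply_sup_eq_sup_comp (dotMP · z) (fun _ _ => dotMP_sup_left _ _ _) (dotMP_bot_left z)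

lemma dotMP_update_bot (k : Fin n) (c : Rmax) (z : Vec Rmax n) :
    dotMP (Function.update ⊥ k c) z = c + z k := by
  refine le_antisymm (Finset.sup_le fun j _ => ?_) (le_sup_of_le (mem_univ k) (by simp))
  by_cases hj : j = k
  · subst hj; simp
  · simp [hj]

lemma mulVecMP_bot (E : Matrix (Fin p) (Fin n) Rmax) : mulVecMP E ⊥ = ⊥ := by
  funext i
  simp [mulVecMP]

lemma mulVecMP_sup (E : Matrix (Fin p) (Fin n) Rmax) (x y : Vec Rmax n) :
    mulVecMP E (x ⊔ y) = mulVecMP E x ⊔ mulVecMP E y := by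
  funext i
  simp only [mulVecMP, Pi.sup_apply, ← sup_sup]
  exact Finset.sup_congr rfl fun k _ => (max_add_add_left (E i k) (x k) (y k)).symm

lemma mulVecMP_mono (E : Matrix (Fin p) (Fin n) Rmax) : Monotone (mulVecMP E) := fun x y h =>
  calc mulVecMP E x ≤ mulVecMP E x ⊔ mulVecMP E y := le_sup_left
    _ = mulVecMP E y := by rw [← mulVecMP_sup, sup_eq_right.2 h]

lemma mulVecMP_finset_sup {ι : Type*} (E : Matrix (Fin p) (Fin n) Rmax) (s : Finset ι)
    (x : ι → Vec Rmax n) : mulVecMP E (s.sup x) = s.sup fun i => mulVecMP E (x i) :=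
  apply_sup_eq_sup_comp (mulVecMP E) (mulVecMP_sup E) (mulVecMP_bot E)

lemma mulVecMP_update_bot (E : Matrix (Fin p) (Fin n) Rmax) (k : Fin n) (c : Rmax)
    (i : Fin p) :
    mulVecMP E (Function.update ⊥ k c) i = E i k + c := by
  rw [add_comm, ← dotMP_update_bot, dotMP_comm]
  rfl

lemma dotMP_mulVecMP (E : Matrix (Fin p) (Fin n) Rmax) (x : Vec Rmax p) (w : Vec Rmax n) :
    dotMP x (mulVecMP E w) = dotMP (mulVecMP Eᵀ x) w := by
  simp only [dotMP, mulVecMP, Matrix.transpose_apply, add_finset_sup, finset_sup_add]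
  rw [Finset.sup_comm]
  refine Finset.sup_congr rfl fun _ _ => Finset.sup_congr rfl fun _ _ => ?_
  ac_rfl

-- Eta-expanded so that `Fin.append` is applied to functions rather than to `Matrix`, which
-- `rw` and `simp` would not see through.
def vstack {α : Type*} (D : Matrix (Fin m) (Fin n) α) (C : Matrix (Fin q) (Fin n) α) :
    Matrix (Fin (m + q)) (Fin n) α :=
  Matrix.of (Fin.append (D ·) (C ·))

@[simp]
lemma vstack_castAdd {α : Type*} (D : Matrix (Fin m) (Fin n) α) (C : Matrix (Fin q) (Fin n) α)
    (i : Fin m) (j : Fin n) : vstack D C (Fin.castAdd q i) j = D i j := by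
  simp [vstack]

@[simp]
lemma vstack_natAdd {α : Type*} (D : Matrix (Fin m) (Fin n) α) (C : Matrix (Fin q) (Fin n) α)
    (i : Fin q) (j : Fin n) : vstack D C (Fin.natAdd m i) j = C i j := by
  simp [vstack]

lemma mulVecMP_vstack (D : Matrix (Fin m) (Fin n) Rmax) (C : Matrix (Fin q) (Fin n) Rmax)
    (x : Vec Rmax n) :
    mulVecMP (vstack D C) x = Fin.append (mulVecMP D x) (mulVecMP C x) := by
  funext i
  refine Fin.addCases (fun i => ?_) (fun i => ?_) i <;>
    simp only [mulVecMP, vstack_castAdd, vstack_natAdd, Fin.append_left, Fin.append_right]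

lemma mulVecMP_vstack_transpose (D : Matrix (Fin m) (Fin n) Rmax)
    (C : Matrix (Fin q) (Fin n) Rmax) (w : Vec Rmax (m + q)) :
    mulVecMP (vstack D C)ᵀ w =
      mulVecMP Dᵀ (fun i => w (Fin.castAdd q i)) ⊔ mulVecMP Cᵀ (fun i => w (Fin.natAdd m i)) := by
  funext j
  simp only [mulVecMP, Pi.sup_apply, finset_sup_univ_fin_add, Matrix.transpose_apply,
    vstack_castAdd, vstack_natAdd]

lemma kerM_vstack (D : Matrix (Fin m) (Fin n) Rmax) (C : Matrix (Fin q) (Fin n) Rmax) :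
    kerM (vstack D C) = kerM D ∩ kerM C := by
  ext x
  simp only [kerM, Set.mem_inter_iff, Set.mem_ofPred_eq, mulVecMP_vstack]
  constructor
  · intro h
    exact ⟨funext fun i => by simpa using congrFun h (Fin.castAdd q i),
      funext fun i => by simpa using congrFun h (Fin.natAdd m i)⟩
  · rintro ⟨h1, h2⟩
    rw [h1, h2]

lemma imM_vstack_transpose (D : Matrix (Fin m) (Fin n) Rmax)
    (C : Matrix (Fin q) (Fin n) Rmax) :
    imM (vstack D C)ᵀ = setSum (imM Dᵀ) (imM Cᵀ) := by
  ext z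
  constructor
  · rintro ⟨w, rfl⟩
    exact ⟨_, ⟨_, rfl⟩, _, ⟨_, rfl⟩, mulVecMP_vstack_transpose D C w⟩
  · rintro ⟨_, ⟨a, rfl⟩, _, ⟨b, rfl⟩, rfl⟩
    exact ⟨Fin.append a b, by simp [mulVecMP_vstack_transpose]⟩

lemma orthS_imM (D : Matrix (Fin n) (Fin m) Rmax) : orthS (imM D) = kerM Dᵀ := by
  ext p
  constructor
  · intro h
    funext j
    have hj := h _ ⟨Function.update ⊥ j 0, rfl⟩
    rwa [dotMP_mulVecMP, dotMP_mulVecMP, dotMP_comm, dotMP_update_bot, dotMP_comm,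
      dotMP_update_bot, zero_add, zero_add] at hj
  · rintro h z ⟨u, rfl⟩
    simp only [kerM, Set.mem_ofPred_eq] at h
    rw [dotMP_mulVecMP, dotMP_mulVecMP, h]

lemma le_dotMP_of_mem_orthC_kerM {E : Matrix (Fin p) (Fin n) Rmax} {z : Vec Rmax n}
    (hz : z ∈ orthC (kerM E)) {x : Vec Rmax n} {k : Fin n}
    (hx : mulVecMP E (Function.update ⊥ k 0) ≤ mulVecMP E x) : z k ≤ dotMP x z := by
  have hker : (x ⊔ Function.update ⊥ k 0, x) ∈ kerM E := by
    change mulVecMP E _ = _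
    rw [mulVecMP_sup, sup_eq_left.2 hx]
  have h := hz _ hker
  rw [dotMP_sup_left, dotMP_update_bot, zero_add] at h
  exact sup_eq_left.1 h

/- Otherwise every row `i` is dominated by some column `j i` with a scalar `c i` such that
`c i + z (j i) < z k`; then `x = ⊕ᵢ c i e_{j i}` has `E x ≥ E e_k` while `xᵗ z < z k`. -/
lemma exists_row_of_mem_orthC_kerM {E : Matrix (Fin p) (Fin n) Rmax} {z : Vec Rmax n}
    (hz : z ∈ orthC (kerM E)) {k : Fin n} (hk : z k ≠ ⊥) :
    ∃ i, E i k ≠ ⊥ ∧ ∀ j, z k + E i j ≤ z j + E i k := by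
  by_contra! h
  have hchoice : ∀ i, ∃ j c, E i k ≤ E i j + c ∧ c + z j < z k := by
    intro i
    by_cases hik : E i k = ⊥
    · exact ⟨k, ⊥, by simp [hik], by simpa [bot_lt_iff_ne_bot] using hk⟩
    obtain ⟨j, hj⟩ := h i hik
    have hij : E i j ≠ ⊥ := fun h' => by simp [h'] at hj
    obtain ⟨c, hc⟩ := exists_add_eq hij (E i k)
    refine ⟨j, c, hc.ge, (WithBot.add_lt_add_iff_left hij).1 ?_⟩
    calc E i j + (c + z j) = z j + E i k := by rw [← add_assoc, hc, add_comm]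
      _ < z k + E i j := hj
      _ = E i j + z k := add_comm _ _
  choose j c hjc using hchoice
  let e : Fin p → Vec Rmax n := fun i => Function.update ⊥ (j i) (c i)
  set x : Vec Rmax n := univ.sup e
  have hEx : mulVecMP E (Function.update ⊥ k 0) ≤ mulVecMP E x := fun i =>
    calc mulVecMP E (Function.update ⊥ k 0) i = E i k := by rw [mulVecMP_update_bot, add_zero]
      _ ≤ E i (j i) + c i := (hjc i).1
      _ = mulVecMP E (e i) i := (mulVecMP_update_bot ..).symm
      _ ≤ mulVecMP E x i := mulVecMP_mono E (le_sup (f := e) (mem_univ i)) i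
  have hxz : dotMP x z < z k := by
    rw [dotMP_finset_sup_left, Finset.sup_lt_iff (bot_lt_iff_ne_bot.2 hk)]
    intro i _
    rw [dotMP_update_bot]
    exact (hjc i).2
  exact (le_dotMP_of_mem_orthC_kerM hz hEx).not_gt hxz

lemma mem_imM_of_forall_exists {E : Matrix (Fin n) (Fin p) Rmax} {z : Vec Rmax n}
    (h : ∀ k, ∃ v, mulVecMP E v ≤ z ∧ z k ≤ mulVecMP E v k) : z ∈ imM E := by
  choose v hv using h
  refine ⟨univ.sup v, le_antisymm (fun k => ?_) ?_⟩
  · exact (hv k).2.trans (mulVecMP_mono E (le_sup (f := v) (mem_univ k)) k)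
  · rw [mulVecMP_finset_sup]
    exact Finset.sup_le fun k _ => (hv k).1

lemma orthC_kerM (E : Matrix (Fin p) (Fin n) Rmax) : orthC (kerM E) = imM Eᵀ := by
  refine Set.Subset.antisymm (fun z hz => mem_imM_of_forall_exists fun k => ?_) ?_
  · by_cases hk : z k = ⊥
    · exact ⟨⊥, by rw [mulVecMP_bot]; exact bot_le, by rw [hk]; exact bot_le⟩
    obtain ⟨i, hik, hi⟩ := exists_row_of_mem_orthC_kerM hz hk
    obtain ⟨c, hc⟩ := exists_add_eq hik (z k)
    refine ⟨Function.update ⊥ i c, fun j => ?_, ?_⟩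
    · rw [mulVecMP_update_bot, Matrix.transpose_apply, ← WithBot.add_le_add_iff_left hik]
      calc E i k + (E i j + c) = z k + E i j := by rw [← hc]; ac_rfl
        _ ≤ z j + E i k := hi j
        _ = E i k + z j := add_comm _ _
    · rw [mulVecMP_update_bot, Matrix.transpose_apply, hc]
  · rintro z ⟨v, rfl⟩ p hp
    simp only [kerM, Set.mem_ofPred_eq] at hp
    rw [dotMP_mulVecMP, dotMP_mulVecMP, Matrix.transpose_transpose, hp]

lemma condInv_orthS {A : Matrix (Fin n) (Fin n) Rmax} {C : Matrix (Fin q) (Fin n) Rmax}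
    {X : Set (Vec Rmax n)} (hX : ContrInv Aᵀ Cᵀ X) : CondInv C A (orthS X) := by
  rintro p ⟨w, ⟨hw, hwC⟩, rfl⟩ z hz
  obtain ⟨w', hw', _, ⟨u, rfl⟩, hAz⟩ := hX ⟨z, hz, rfl⟩
  simp only [kerM, Set.mem_ofPred_eq] at hwC
  have key : ∀ x, dotMP (mulVecMP A x) z = dotMP x w' ⊔ dotMP u (mulVecMP C x) := fun x => by
    rw [dotMP_comm, dotMP_mulVecMP, hAz, dotMP_sup_left, dotMP_mulVecMP, dotMP_comm w']
  rw [key, key, hw w' hw', hwC]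

lemma contrInv_orthC_kerM {A : Matrix (Fin n) (Fin n) Rmax} {C : Matrix (Fin q) (Fin n) Rmax}
    {D : Matrix (Fin m) (Fin n) Rmax} (h : CondInv C A (kerM D)) :
    ContrInv Aᵀ Cᵀ (orthC (kerM D)) := by
  rw [orthC_kerM]
  rintro _ ⟨_, ⟨v, rfl⟩, rfl⟩
  rw [← imM_vstack_transpose, ← orthC_kerM, kerM_vstack]
  intro p hp
  have hA : mulVecMP D (mulVecMP A p.1) = mulVecMP D (mulVecMP A p.2) := h ⟨p, hp, rfl⟩
  simp only [dotMP_mulVecMP, Matrix.transpose_transpose, hA]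

lemma memLfg_orthS {A : Matrix (Fin n) (Fin n) Rmax} {C : Matrix (Fin q) (Fin n) Rmax}
    {V : Set (Vec Rmax n × Vec Rmax n)} {X : Set (Vec Rmax n)} (hX : memMfg A C (orthC V) X) :
    memLfg C A V (orthS X) := by
  obtain ⟨⟨m, D, rfl⟩, hinv, hXV⟩ := hX
  exact ⟨⟨m, Dᵀ, orthS_imM D⟩, condInv_orthS hinv, subset_orthS_iff.2 hXV⟩

lemma memMfg_orthC {A : Matrix (Fin n) (Fin n) Rmax} {C : Matrix (Fin q) (Fin n) Rmax}
    {V W : Set (Vec Rmax n × Vec Rmax n)} (hW : memLfg C A V W) :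
    memMfg A C (orthC V) (orthC W) := by
  obtain ⟨⟨m, D, rfl⟩, hinv, hVW⟩ := hW
  exact ⟨⟨m, Dᵀ, orthC_kerM D⟩, contrInv_orthC_kerM hinv, orthC_anti hVW⟩

lemma orthS_orthC_of_eq_kerM {W : Set (Vec Rmax n × Vec Rmax n)}
    (hW : ∃ m, ∃ D : Matrix (Fin m) (Fin n) Rmax, W = kerM D) : orthS (orthC W) = W := by
  obtain ⟨m, D, rfl⟩ := hW
  rw [orthC_kerM, orthS_imM, Matrix.transpose_transpose]

end MaxPlus

open MaxPlus in
theorem fg_duality_general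
    {n q : ℕ} (A : Matrix (Fin n) (Fin n) Rmax) (C : Matrix (Fin q) (Fin n) Rmax)
    (V : Set (Vec Rmax n × Vec Rmax n)) :
    ((∃ Vfg, memLfg C A V Vfg ∧ ∀ W, memLfg C A V W → Vfg ⊆ W) ↔
      (∃ Kfg, memMfg A C (orthC V) Kfg ∧ ∀ X, memMfg A C (orthC V) X → X ⊆ Kfg)) ∧
    (∀ Vfg Kfg,
      (memLfg C A V Vfg ∧ ∀ W, memLfg C A V W → Vfg ⊆ W) →
      (memMfg A C (orthC V) Kfg ∧ ∀ X, memMfg A C (orthC V) X → X ⊆ Kfg) →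
      Vfg = orthS Kfg) := by
  refine ⟨⟨?_, ?_⟩, ?_⟩
  · rintro ⟨Vfg, hVfg, hmin⟩
    exact ⟨orthC Vfg, memMfg_orthC hVfg,
      fun X hX => subset_orthS_iff.1 (hmin _ (memLfg_orthS hX))⟩
  · rintro ⟨Kfg, hKfg, hmax⟩
    refine ⟨orthS Kfg, memLfg_orthS hKfg, fun W hW => ?_⟩
    calc orthS Kfg ⊆ orthS (orthC W) := orthS_anti (hmax _ (memMfg_orthC hW))
      _ = W := orthS_orthC_of_eq_kerM hW.1
  · rintro Vfg Kfg ⟨hVfg, hmin⟩ ⟨hKfg, hmax⟩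
    refine (hmin _ (memLfg_orthS hKfg)).antisymm ?_
    calc orthS Kfg ⊆ orthS (orthC Vfg) := orthS_anti (hmax _ (memMfg_orthC hVfg))
      _ = Vfg := orthS_orthC_of_eq_kerM hVfg.1

/-- Let `V` be a congruence on `ℝ_max^n` and `K := V^⊤`.
Then `L_fg(C,A,V)` admits a minimal element iff `M_fg(Aᵗ,Cᵗ,K)` admits a
maximal element; and when they exist, the minimal element `V_fg(C,A)` equals
the orthogonal `(K^fg(Aᵗ,Cᵗ))^⊥` of the maximal element. -/
theorem fg_duality
    {n q : ℕ} (A : Matrix (Fin n) (Fin n) Rmax) (C : Matrix (Fin q) (Fin n) Rmax)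
    (V : Set (Vec Rmax n × Vec Rmax n)) (hV : IsCongruence V) :
    ((∃ Vfg, memLfg C A V Vfg ∧ ∀ W, memLfg C A V W → Vfg ⊆ W) ↔
      (∃ Kfg, memMfg A C (orthC V) Kfg ∧ ∀ X, memMfg A C (orthC V) X → X ⊆ Kfg)) ∧
    (∀ Vfg Kfg,
      (memLfg C A V Vfg ∧ ∀ W, memLfg C A V W → Vfg ⊆ W) →
      (memMfg A C (orthC V) Kfg ∧ ∀ X, memMfg A C (orthC V) X → X ⊆ Kfg) →
      Vfg = orthS Kfg) :=
  fg_duality_general A C V
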